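/- Let X₁, …, X_k be i.i.d. points uniformly distributed in the n-dimensional unit ball. Then as n → ∞, the ratio of the maximum to the minimum pairwise Euclidean distance, max_{i<j} ‖Xᵢ−Xⱼ‖ / min_{i<j} ‖Xᵢ−Xⱼ‖, converges to 1 in probability, for any fixed k ≥ 2. -/

import Mathlib

/-!
In high dimension the uniform measure on the unit ball concentrates both near the boundary sphere
and, for each fixed `x` of the ball, near the hyperplane `x^⊥`: the points `y` of the ball with
`‖y‖ < 1 - s`, resp. with `s < ⟪x, y⟫`, lie in a ball of radius `1 - s`, resp. `√(1 - s²)`, so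
they carry probability at most `(1 - s)ⁿ`, resp. `√(1 - s²)ⁿ`. By independence and Fubini, with
probability tending to one all `k` points have norm in `[1 - s, 1]` and are pairwise almost
orthogonal, which forces every pairwise distance into `[√(2 - 6s), √(2 + 6s)]`.
-/

open MeasureTheory ProbabilityTheory Filter

/-- The ratio of the maximum to the minimum pairwise distance among the points
`x 0, …, x (k-1)`, the maximum and minimum being taken over pairs `i < j`. -/
noncomputable def pairwiseDistRatio {k : ℕ} (hk : 2 ≤ k) {E : Type*} [PseudoMetricSpace E]
    (x : Fin k → E) : ℝ :=
  (Finset.sup' (Finset.univ.filter fun p : Fin k × Fin k => p.1 < p.2)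
      ⟨(⟨0, by omega⟩, ⟨1, by omega⟩), by simp [Fin.mk_lt_mk]⟩
      fun p => dist (x p.1) (x p.2)) /
    (Finset.inf' (Finset.univ.filter fun p : Fin k × Fin k => p.1 < p.2)
      ⟨(⟨0, by omega⟩, ⟨1, by omega⟩), by simp [Fin.mk_lt_mk]⟩
      fun p => dist (x p.1) (x p.2))

open Metric Set Topology RealInnerProductSpace Module

theorem pairwiseDistRatio_mem_Icc {k : ℕ} (hk : 2 ≤ k) {E : Type*} [PseudoMetricSpace E]
    (x : Fin k → E) {a b : ℝ} (ha : 0 < a) (h : ∀ i j, i < j → dist (x i) (x j) ∈ Icc a b) :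
    pairwiseDistRatio hk x ∈ Icc 1 (b / a) := by
  set S := Finset.univ.filter fun p : Fin k × Fin k => p.1 < p.2
  set d : Fin k × Fin k → ℝ := fun p => dist (x p.1) (x p.2)
  have hS : S.Nonempty := ⟨(⟨0, by omega⟩, ⟨1, by omega⟩), by simp [S, Fin.mk_lt_mk]⟩
  have hd : ∀ p ∈ S, d p ∈ Icc a b := fun p hp => h p.1 p.2 (Finset.mem_filter.1 hp).2
  have hmin : a ≤ S.inf' hS d := Finset.le_inf' _ _ fun p hp => (hd p hp).1
  have hmax : S.sup' hS d ≤ b := Finset.sup'_le _ _ fun p hp => (hd p hp).2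
  have hminmax : S.inf' hS d ≤ S.sup' hS d :=
    (Finset.inf'_le d hS.choose_spec).trans (Finset.le_sup' d hS.choose_spec)
  exact ⟨(one_le_div (ha.trans_le hmin)).2 hminmax,
    div_le_div₀ (ha.le.trans (hmin.trans (hminmax.trans hmax))) hmax ha hmin⟩

section InnerProductSpace

variable {E : Type*} [NormedAddCommGroup E] [InnerProductSpace ℝ E]

theorem dist_mem_Icc_of_abs_inner_le {x y : E} {s : ℝ} (hx : ‖x‖ ∈ Icc (1 - s) 1)
    (hy : ‖y‖ ∈ Icc (1 - s) 1) (hxy : |⟪x, y⟫| ≤ s) :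
    dist x y ∈ Icc √(2 - 6 * s) √(2 + 6 * s) := by
  have hsq : ‖x - y‖ ^ 2 = ‖x‖ ^ 2 + ‖y‖ ^ 2 - 2 * ⟪x, y⟫ := by
    rw [norm_sub_sq_real]; ring
  obtain ⟨hx1, hx2⟩ := hx
  obtain ⟨hy1, hy2⟩ := hy
  obtain ⟨hxy1, hxy2⟩ := abs_le.1 hxy
  rw [dist_eq_norm]
  constructor
  · rw [Real.sqrt_le_left (norm_nonneg _)]
    nlinarith [sq_nonneg (‖x‖ - 1), sq_nonneg (‖y‖ - 1)]
  · rw [Real.le_sqrt (norm_nonneg _) (by linarith [norm_nonneg x])]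
    nlinarith [norm_nonneg x, norm_nonneg y]

theorem abs_pairwiseDistRatio_sub_one_le {k : ℕ} (hk : 2 ≤ k) (x : Fin k → E) {s : ℝ}
    (hs : s < 1 / 3) (hnorm : ∀ i, ‖x i‖ ∈ Icc (1 - s) 1)
    (hinner : ∀ i j, i ≠ j → |⟪x i, x j⟫| ≤ s) :
    |pairwiseDistRatio hk x - 1| ≤ √(2 + 6 * s) / √(2 - 6 * s) - 1 := by
  obtain ⟨h1, h2⟩ := pairwiseDistRatio_mem_Icc hk x (Real.sqrt_pos.2 (by linarith))
    fun i j hij => dist_mem_Icc_of_abs_inner_le (hnorm i) (hnorm j) (hinner i j hij.ne)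
  rw [abs_of_nonneg (by linarith)]
  linarith

theorem closedBall_inter_setOf_lt_inner_subset {x : E} (hx : ‖x‖ ≤ 1) {s : ℝ} (hs : 0 ≤ s) :
    closedBall 0 1 ∩ {y | s < ⟪x, y⟫} ⊆ closedBall (s • x) √(1 - s ^ 2) := by
  rintro y ⟨hy, hxy : s < ⟪x, y⟫⟩
  rw [mem_closedBall_zero_iff] at hy
  have hsq : ‖y - s • x‖ ^ 2 = ‖y‖ ^ 2 - 2 * s * ⟪x, y⟫ + s ^ 2 * ‖x‖ ^ 2 := by
    rw [norm_sub_sq_real, inner_smul_right, real_inner_comm, norm_smul, Real.norm_of_nonneg hs]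
    ring
  have hs1 : s ≤ 1 := by nlinarith [norm_nonneg x, norm_nonneg y, real_inner_le_norm x y]
  have hx2 : ‖x‖ ^ 2 ≤ 1 := pow_le_one₀ (norm_nonneg x) hx
  have hy2 : ‖y‖ ^ 2 ≤ 1 := pow_le_one₀ (norm_nonneg y) hy
  rw [mem_closedBall, dist_eq_norm, Real.le_sqrt (norm_nonneg _) (by nlinarith), hsq]
  nlinarith [mul_le_mul_of_nonneg_left hxy.le hs, mul_le_mul_of_nonneg_left hx2 (sq_nonneg s)]

end InnerProductSpace

theorem exists_pos_sqrt_div_sqrt_lt {ε : ℝ} (hε : 0 < ε) :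
    ∃ s : ℝ, 0 < s ∧ s < 1 / 3 ∧ √(2 + 6 * s) / √(2 - 6 * s) < 1 + ε := by
  have hcont : ContinuousAt (fun s : ℝ => √(2 + 6 * s) / √(2 - 6 * s)) 0 := by
    fun_prop (disch := norm_num)
  have h0 : √(2 + 6 * 0) / √(2 - 6 * 0) < 1 + ε := by simpa using hε
  have hlim : ∀ᶠ s in 𝓝 (0 : ℝ), √(2 + 6 * s) / √(2 - 6 * s) < 1 + ε ∧ s < 1 / 3 :=
    (hcont.eventually (gt_mem_nhds h0)).and (gt_mem_nhds (by norm_num))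
  obtain ⟨s, ⟨hsε, hs⟩, hs0⟩ := ((hlim.filter_mono nhdsWithin_le_nhds).and
    (self_mem_nhdsWithin (s := Ioi 0))).exists
  exact ⟨s, hs0, hs, hsε⟩

section HaarMeasure

variable {E : Type*} [NormedAddCommGroup E] [NormedSpace ℝ E] [FiniteDimensional ℝ E]
  [MeasurableSpace E] [BorelSpace E] (μ : Measure E) [μ.IsAddHaarMeasure]

theorem cond_closedBall_le_of_inter_subset {A : Set E} {z : E} {r : ℝ} (hr : 0 ≤ r)
    (hA : closedBall 0 1 ∩ A ⊆ closedBall z r) :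
    μ[A | closedBall 0 1] ≤ ENNReal.ofReal (r ^ finrank ℝ E) := by
  rw [cond_apply measurableSet_closedBall]
  calc (μ (closedBall 0 1))⁻¹ * μ (closedBall 0 1 ∩ A)
      ≤ (μ (closedBall 0 1))⁻¹ * μ (closedBall z r) := by gcongr
    _ = ENNReal.ofReal (r ^ finrank ℝ E) := by
      rw [Measure.addHaar_closedBall' μ z hr, mul_left_comm,
        ENNReal.inv_mul_cancel (measure_closedBall_pos μ 0 one_pos).ne'
          measure_closedBall_lt_top.ne, mul_one]

theorem cond_closedBall_norm_notMem_Icc_le {s : ℝ} (hs : s ≤ 1) :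
    μ[{x | ‖x‖ ∉ Icc (1 - s) 1} | closedBall 0 1] ≤ ENNReal.ofReal ((1 - s) ^ finrank ℝ E) :=
  cond_closedBall_le_of_inter_subset μ (by linarith) fun x ⟨hx, hxs⟩ => by
    rw [mem_closedBall_zero_iff] at hx ⊢
    simp only [mem_ofPred_eq, mem_Icc, not_and_or, not_le] at hxs
    rcases hxs with hxs | hxs <;> linarith

variable {Ω : Type*} [MeasurableSpace Ω] {P : Measure Ω}

theorem measure_norm_notMem_Icc_le {Y : Ω → E} (hY : Measurable Y)
    (hlaw : P.map Y = μ[|closedBall 0 1]) {s : ℝ} (hs : s ≤ 1) :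
    P {ω | ‖Y ω‖ ∉ Icc (1 - s) 1} ≤ ENNReal.ofReal ((1 - s) ^ finrank ℝ E) := by
  have hS : MeasurableSet {x : E | ‖x‖ ∉ Icc (1 - s) 1} :=
    (measurableSet_Icc.preimage measurable_norm).compl
  have h := cond_closedBall_norm_notMem_Icc_le μ hs
  rwa [← hlaw, Measure.map_apply hY hS] at h

end HaarMeasure

section InnerProductHaarMeasure

variable {E : Type*} [NormedAddCommGroup E] [InnerProductSpace ℝ E] [FiniteDimensional ℝ E]
  [MeasurableSpace E] [BorelSpace E] (μ : Measure E) [μ.IsAddHaarMeasure]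

theorem cond_closedBall_setOf_lt_abs_inner_le {x : E} (hx : ‖x‖ ≤ 1) {s : ℝ} (hs : 0 ≤ s) :
    μ[{y | s < |⟪x, y⟫|} | closedBall 0 1] ≤
      2 * ENNReal.ofReal (√(1 - s ^ 2) ^ finrank ℝ E) := by
  have hcap : ∀ x : E, ‖x‖ ≤ 1 →
      μ[{y | s < ⟪x, y⟫} | closedBall 0 1] ≤ ENNReal.ofReal (√(1 - s ^ 2) ^ finrank ℝ E) :=
    fun x hx => cond_closedBall_le_of_inter_subset μ (Real.sqrt_nonneg _)
      (closedBall_inter_setOf_lt_inner_subset hx hs)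
  have hsplit : {y | s < |⟪x, y⟫|} = {y | s < ⟪x, y⟫} ∪ {y | s < ⟪-x, y⟫} := by
    ext y
    simp only [mem_ofPred_eq, mem_union, lt_abs, inner_neg_left]
  rw [hsplit, two_mul]
  exact (measure_union_le _ _).trans
    (add_le_add (hcap x hx) (hcap (-x) (by rwa [norm_neg])))

theorem cond_closedBall_prod_setOf_lt_abs_inner_le {s : ℝ} (hs : 0 ≤ s) :
    (μ[|closedBall 0 1].prod μ[|closedBall 0 1]) {p : E × E | s < |⟪p.1, p.2⟫|} ≤
      2 * ENNReal.ofReal (√(1 - s ^ 2) ^ finrank ℝ E) := by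
  rw [Measure.prod_apply (isOpen_lt continuous_const continuous_inner.abs).measurableSet]
  calc ∫⁻ x, μ[Prod.mk x ⁻¹' {p : E × E | s < |⟪p.1, p.2⟫|} | closedBall 0 1] ∂μ[|closedBall 0 1]
      ≤ ∫⁻ _, 2 * ENNReal.ofReal (√(1 - s ^ 2) ^ finrank ℝ E) ∂μ[|closedBall 0 1] :=
        lintegral_mono_ae <| (ae_cond_mem measurableSet_closedBall).mono fun x hx =>
          cond_closedBall_setOf_lt_abs_inner_le μ (mem_closedBall_zero_iff.1 hx) hs
    _ ≤ 2 * ENNReal.ofReal (√(1 - s ^ 2) ^ finrank ℝ E) := by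
        rw [lintegral_const]
        exact mul_le_of_le_one_right' prob_le_one

variable {Ω : Type*} [MeasurableSpace Ω] {P : Measure Ω}

theorem measure_lt_abs_inner_le {Y Z : Ω → E} (hY : Measurable Y) (hZ : Measurable Z)
    (hYZ : IndepFun Y Z P) (hlawY : P.map Y = μ[|closedBall 0 1])
    (hlawZ : P.map Z = μ[|closedBall 0 1]) {s : ℝ} (hs : 0 ≤ s) :
    P {ω | s < |⟪Y ω, Z ω⟫|} ≤ 2 * ENNReal.ofReal (√(1 - s ^ 2) ^ finrank ℝ E) := by
  have hmap : P.map (fun ω => (Y ω, Z ω)) = μ[|closedBall 0 1].prod μ[|closedBall 0 1] := by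
    rw [(indepFun_iff_map_prod_eq_prod_map_map' hY.aemeasurable hZ.aemeasurable
      (by rw [hlawY]; infer_instance) (by rw [hlawZ]; infer_instance)).1 hYZ, hlawY, hlawZ]
  have h := cond_closedBall_prod_setOf_lt_abs_inner_le μ hs
  rwa [← hmap, Measure.map_apply (hY.prodMk hZ)
    (isOpen_lt continuous_const continuous_inner.abs).measurableSet] at h

end InnerProductHaarMeasure

theorem tendsto_nhds_zero_of_le_mul_ofReal_pow {f : ℕ → ENNReal} {C : ENNReal}
    (hC : C ≠ ⊤) {c : ℝ} (hc0 : 0 ≤ c) (hc1 : c < 1) (hf : ∀ n, f n ≤ C * ENNReal.ofReal (c ^ n)) :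
    Tendsto f atTop (𝓝 0) := by
  have h : Tendsto (fun n => C * ENNReal.ofReal (c ^ n)) atTop (𝓝 0) := by
    simpa using ENNReal.Tendsto.const_mul
      (ENNReal.tendsto_ofReal (tendsto_pow_atTop_nhds_zero_of_lt_one hc0 hc1)) (Or.inr hC)
  exact tendsto_of_tendsto_of_tendsto_of_le_of_le tendsto_const_nhds h (fun _ => zero_le) hf

section NegligibleEvents

variable {α ι : Type*} {Ω : α → Type*} [∀ a, MeasurableSpace (Ω a)] {μ : ∀ a, Measure (Ω a)}
  {l : Filter α}

theorem tendsto_measure_of_subset_nhds_zero {A B : ∀ a, Set (Ω a)}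
    (hB : Tendsto (fun a => μ a (B a)) l (𝓝 0)) (hAB : ∀ a, A a ⊆ B a) :
    Tendsto (fun a => μ a (A a)) l (𝓝 0) :=
  tendsto_of_tendsto_of_tendsto_of_le_of_le tendsto_const_nhds hB (fun _ => zero_le)
    fun a => measure_mono (hAB a)

theorem tendsto_measure_union_nhds_zero {A B : ∀ a, Set (Ω a)}
    (hA : Tendsto (fun a => μ a (A a)) l (𝓝 0)) (hB : Tendsto (fun a => μ a (B a)) l (𝓝 0)) :
    Tendsto (fun a => μ a (A a ∪ B a)) l (𝓝 0) :=
  tendsto_of_tendsto_of_tendsto_of_le_of_le tendsto_const_nhds (by simpa using hA.add hB)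
    (fun _ => zero_le) fun a => measure_union_le _ _

theorem tendsto_measure_biUnion_finset_nhds_zero (s : Finset ι) {A : ∀ a, ι → Set (Ω a)}
    (h : ∀ i ∈ s, Tendsto (fun a => μ a (A a i)) l (𝓝 0)) :
    Tendsto (fun a => μ a (⋃ i ∈ s, A a i)) l (𝓝 0) :=
  tendsto_of_tendsto_of_tendsto_of_le_of_le tendsto_const_nhds
    (by simpa using tendsto_finsetSum s h) (fun _ => zero_le)
    fun a => measure_biUnion_finset_le s (A a)

end NegligibleEvents

theorem pairwise_dist_ratio_tendsto_one_general
    {k : ℕ} (hk : 2 ≤ k)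
    (Ω : ℕ → Type*) (mΩ : ∀ n, MeasurableSpace (Ω n))
    (P : ∀ n, Measure (Ω n))
    (X : ∀ n, Fin k → Ω n → EuclideanSpace ℝ (Fin n))
    (hmeas : ∀ n i, Measurable (X n i))
    (hindep : ∀ n, iIndepFun (X n) (P n))
    (hunif : ∀ n i,
      (P n).map (X n i) =
        (volume (Metric.closedBall (0 : EuclideanSpace ℝ (Fin n)) 1))⁻¹ •
          volume.restrict (Metric.closedBall (0 : EuclideanSpace ℝ (Fin n)) 1)) :
    ∀ ε > (0 : ℝ),
      Tendsto (fun n : ℕ =>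
          P n {ω | ε < |pairwiseDistRatio hk (fun i => X n i ω) - 1|})
        atTop (nhds 0) := by
  intro ε hε
  obtain ⟨s, hs0, hs, hsε⟩ := exists_pos_sqrt_div_sqrt_lt hε
  have hnorm : ∀ i ∈ Finset.univ, Tendsto (fun n => P n {ω | ‖X n i ω‖ ∉ Icc (1 - s) 1})
      atTop (𝓝 0) := fun i _ =>
    tendsto_nhds_zero_of_le_mul_ofReal_pow (c := 1 - s) ENNReal.one_ne_top (by linarith)
      (by linarith) fun n => by
        simpa using measure_norm_notMem_Icc_le volume (hmeas n i) (hunif n i) (by linarith)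
  have hinner : ∀ p ∈ (Finset.univ : Finset (Fin k)).offDiag,
      Tendsto (fun n => P n {ω | s < |⟪X n p.1 ω, X n p.2 ω⟫|}) atTop (𝓝 0) := fun p hp =>
    tendsto_nhds_zero_of_le_mul_ofReal_pow (c := √(1 - s ^ 2)) ENNReal.ofNat_ne_top
      (Real.sqrt_nonneg _) ((Real.sqrt_lt' one_pos).2 (by nlinarith)) fun n => by
        simpa using measure_lt_abs_inner_le volume (hmeas n p.1) (hmeas n p.2)
          ((hindep n).indepFun (Finset.mem_offDiag.1 hp).2.2) (hunif n _) (hunif n _) hs0.le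
  refine tendsto_measure_of_subset_nhds_zero (tendsto_measure_union_nhds_zero
    (tendsto_measure_biUnion_finset_nhds_zero _ hnorm)
    (tendsto_measure_biUnion_finset_nhds_zero _ hinner)) fun n ω hω => ?_
  by_contra hgood
  simp only [mem_union, mem_iUnion, Finset.mem_univ, Finset.mem_offDiag, mem_ofPred_eq,
    exists_prop, true_and, not_or, not_exists, not_and, not_not, not_lt] at hgood
  obtain ⟨hnorm', hinner'⟩ := hgood
  have hratio := abs_pairwiseDistRatio_sub_one_le hk (fun i => X n i ω) hs hnorm'
    fun i j hij => hinner' (i, j) hij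
  exact lt_asymm hω (hratio.trans_lt (by linarith))

/-- Distance concentration in high dimensions: if `X₁, …, X_k` are i.i.d. uniform in the
`n`-dimensional unit ball, then as `n → ∞` the ratio of the maximum to the minimum pairwise
Euclidean distance converges to `1` in probability, for any fixed `k ≥ 2`. -/
theorem pairwise_dist_ratio_tendsto_one
    {k : ℕ} (hk : 2 ≤ k)
    (Ω : ℕ → Type*) (mΩ : ∀ n, MeasurableSpace (Ω n))
    (P : ∀ n, Measure (Ω n)) (hP : ∀ n, IsProbabilityMeasure (P n))
    (X : ∀ n, Fin k → Ω n → EuclideanSpace ℝ (Fin n))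
    (hmeas : ∀ n i, Measurable (X n i))
    (hindep : ∀ n, iIndepFun (X n) (P n))
    (hunif : ∀ n i,
      (P n).map (X n i) =
        (volume (Metric.closedBall (0 : EuclideanSpace ℝ (Fin n)) 1))⁻¹ •
          volume.restrict (Metric.closedBall (0 : EuclideanSpace ℝ (Fin n)) 1)) :
    ∀ ε > (0 : ℝ),
      Tendsto (fun n : ℕ =>
          P n {ω | ε < |pairwiseDistRatio hk (fun i => X n i ω) - 1|})
        atTop (nhds 0) :=
  pairwise_dist_ratio_tendsto_one_general hk Ω mΩ P X hmeas hindep hunif
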